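/- For every Büchi automaton A over the alphabet 𝒫(AP), the support of A satisfies supp(A) = ⋂ { upCCT(π) | π ∈ L(A) ∩ UP }, i.e. a formula is supported by A if and only if it is satisfied by every ultimately periodic trace accepted by A. -/

import Mathlib

/-- LTL formulae over a set `AP` of atomic propositions:
`⊥ | p | ¬φ | φ∨φ | Xφ | φ U φ`. -/
inductive LTLFormula (AP : Type) : Type
  | bot : LTLFormula AP
  | atom : AP → LTLFormula AP
  | neg : LTLFormula AP → LTLFormula AP
  | disj : LTLFormula AP → LTLFormula AP → LTLFormula AP
  | next : LTLFormula AP → LTLFormula AP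
  | untl : LTLFormula AP → LTLFormula AP → LTLFormula AP

/-- A trace is an infinite sequence of sets of atomic propositions. -/
abbrev Trace (AP : Type) : Type := ℕ → Set AP

/-- The suffix `π^i` of a trace. -/
def Trace.suffix {AP : Type} (π : Trace AP) (i : ℕ) : Trace AP := fun j => π (i + j)

/-- Satisfaction of an LTL formula by a trace. -/
def LTLFormula.sat {AP : Type} : LTLFormula AP → Trace AP → Prop
  | .bot, _ => False
  | .atom p, π => p ∈ π 0
  | .neg φ, π => ¬ LTLFormula.sat φ π
  | .disj φ ψ, π => LTLFormula.sat φ π ∨ LTLFormula.sat ψ π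
  | .next φ, π => LTLFormula.sat φ (π.suffix 1)
  | .untl φ ψ, π => ∃ i, LTLFormula.sat ψ (π.suffix i) ∧ ∀ j < i, LTLFormula.sat φ (π.suffix j)

/-- A Kripke structure: a finite state set (`Fin n`), a nonempty set of initial
states, a left-total transition relation, and a labeling function. -/
structure Kripke (AP : Type) where
  n : ℕ
  init : Set (Fin n)
  init_nonempty : init.Nonempty
  trans : Fin n → Fin n → Prop
  trans_total : ∀ s, ∃ s', trans s s'
  label : Fin n → Set AP

/-- The traces of a Kripke structure. -/
def Kripke.traces {AP : Type} (M : Kripke AP) : Set (Trace AP) :=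
  {π | ∃ ρ : ℕ → Fin M.n, ρ 0 ∈ M.init ∧ (∀ i, M.trans (ρ i) (ρ (i + 1))) ∧
        ∀ i, π i = M.label (ρ i)}

/-- `M ⊨ φ` : every trace of `M` satisfies `φ`. -/
def Kripke.sat {AP : Type} (M : Kripke AP) (φ : LTLFormula AP) : Prop :=
  ∀ π ∈ M.traces, φ.sat π

/-- `M ⊨ X` : `M` satisfies every formula in `X`. -/
def Kripke.satSet {AP : Type} (M : Kripke AP) (X : Set (LTLFormula AP)) : Prop :=
  ∀ φ ∈ X, M.sat φ

/-- The consequence operator of LTL: `ψ ∈ CnLTL AP X` iff every Kripke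
structure satisfying all of `X` satisfies `ψ`. -/
def CnLTL (AP : Type) (X : Set (LTLFormula AP)) : Set (LTLFormula AP) :=
  {ψ | ∀ M : Kripke AP, M.satSet X → M.sat ψ}

/-- The infinite word `ρ σ^ω` determined by a finite prefix `ρ` and a nonempty
finite period `σ`. -/
def extendPer {α : Type} (ρ σ : List α) (hσ : σ ≠ []) : ℕ → α := fun i =>
  if h : i < ρ.length then ρ.get ⟨i, h⟩
  else σ.get ⟨(i - ρ.length) % σ.length, Nat.mod_lt _ (List.length_pos_iff.mpr hσ)⟩

/-- An infinite word is ultimately periodic if it equals `ρ σ^ω` for finite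
words `ρ, σ` with `σ` nonempty. -/
def UltPeriodic {α : Type} (w : ℕ → α) : Prop :=
  ∃ (ρ σ : List α) (hσ : σ ≠ []), w = extendPer ρ σ hσ

/-- A Büchi automaton over alphabet `A`: a finite state set (`Fin n`), a
transition relation, initial states and recurrence states. -/
structure Buchi (A : Type) where
  n : ℕ
  trans : Fin n → A → Fin n → Prop
  start : Set (Fin n)
  recur : Set (Fin n)

/-- Acceptance of an infinite word by a Büchi automaton: there is a run from
an initial state visiting recurrence states infinitely often. -/
def Buchi.Accepts {A : Type} (B : Buchi A) (w : ℕ → A) : Prop :=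
  ∃ ρ : ℕ → Fin B.n, ρ 0 ∈ B.start ∧ (∀ i, B.trans (ρ i) (w i) (ρ (i + 1))) ∧
    ∀ N, ∃ i, N ≤ i ∧ ρ i ∈ B.recur

/-- The language of a Büchi automaton. -/
def Buchi.lang {A : Type} (B : Buchi A) : Set (ℕ → A) := {w | B.Accepts w}

/-- The support of a Büchi automaton over `𝒫(AP)`: the LTL formulae satisfied
by every accepted trace. -/
def Buchi.supp {AP : Type} (B : Buchi (Set AP)) : Set (LTLFormula AP) :=
  {φ | ∀ π ∈ B.lang, φ.sat π}

/-- The set of formulae satisfied by a trace. -/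
def upCCT {AP : Type} (π : Trace AP) : Set (LTLFormula AP) := {φ | φ.sat π}

/-- The complete consistent theories of LTL. -/
def CCT_LTL (AP : Type) : Set (Set (LTLFormula AP)) :=
  {K | CnLTL AP K = K ∧ K ≠ Set.univ ∧ ∀ φ, φ ∈ K ∨ LTLFormula.neg φ ∈ K}


/-! If `φ` fails on a trace `π` accepted by a run `ρ`, choose recurrence positions `i < i + p`
at which `ρ` is in the same state and the subformulas of `φ` have the same truth values, so
far apart that every until subformula holding at `i` is fulfilled, or has become false, before
`i + p`. The lasso `π[0, i + p) (π[i, i + p))^ω` is accepted and ultimately periodic, and by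
induction on subformulas each of its positions satisfies the same subformulas of `φ` as the
position of `π` it was copied from; in particular it refutes `φ`. -/

namespace Trace

variable {AP : Type}

@[simp]
lemma suffix_zero (π : Trace AP) : π.suffix 0 = π := by
  funext m; simp [suffix]

@[simp]
lemma suffix_suffix (π : Trace AP) (a b : ℕ) : (π.suffix a).suffix b = π.suffix (a + b) := by
  funext m; simp [suffix, Nat.add_assoc]

end Trace

namespace LTLFormula

variable {AP : Type}

def subformulas : LTLFormula AP → List (LTLFormula AP)
  | bot => [bot]
  | atom p => [atom p]
  | neg φ => neg φ :: φ.subformulas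
  | disj φ ψ => disj φ ψ :: (φ.subformulas ++ ψ.subformulas)
  | next φ => next φ :: φ.subformulas
  | untl φ ψ => untl φ ψ :: (φ.subformulas ++ ψ.subformulas)

lemma mem_subformulas_self (φ : LTLFormula AP) : φ ∈ φ.subformulas := by
  cases φ <;> simp [subformulas]

def Discharged : LTLFormula AP → Trace AP → Prop
  | untl φ ψ, π => (untl φ ψ).sat π → ψ.sat π
  | _, _ => True

lemma exists_discharged_suffix (χ : LTLFormula AP) (π : Trace AP) (i : ℕ) :
    ∃ k, i ≤ k ∧ χ.Discharged (π.suffix k) := by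
  cases χ with
  | untl φ ψ =>
    by_cases h : (untl φ ψ).sat (π.suffix i)
    · obtain ⟨d, hd, -⟩ := h
      refine ⟨i + d, by omega, fun _ => ?_⟩
      simpa using hd
    · exact ⟨i, le_rfl, fun h' => absurd h' h⟩
  | _ => exact ⟨i, le_rfl, trivial⟩

lemma sat_untl_iff {φ ψ : LTLFormula AP} {π : Trace AP} :
    (untl φ ψ).sat π ↔ ψ.sat π ∨ φ.sat π ∧ (untl φ ψ).sat (π.suffix 1) := by
  constructor
  · rintro ⟨d, hd, hlt⟩
    cases d with
    | zero => exact .inl (by simpa using hd)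
    | succ d =>
      refine .inr ⟨by simpa using hlt 0 d.succ_pos, d, ?_, fun e he => ?_⟩
      · simpa [Nat.add_comm] using hd
      · simpa [Nat.add_comm] using hlt (e + 1) (by omega)
  · rintro (h | ⟨h, d, hd, hlt⟩)
    · exact ⟨0, by simpa using h, fun _ h => absurd h (Nat.not_lt_zero _)⟩
    · refine ⟨d + 1, by simpa [Nat.add_comm] using hd, fun e he => ?_⟩
      cases e with
      | zero => simpa using h
      | succ e => simpa [Nat.add_comm] using hlt e (by omega)

lemma sat_untl_of_step {φ ψ : LTLFormula AP} {t : ℕ → Trace AP}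
    (hstep : ∀ n, (untl φ ψ).sat (t (n + 1)) → (untl φ ψ).sat ((t n).suffix 1)) {d : ℕ}
    (hd : ψ.sat (t d)) (hlt : ∀ e < d, φ.sat (t e)) : (untl φ ψ).sat (t 0) := by
  induction d generalizing t with
  | zero => exact sat_untl_iff.2 (.inl hd)
  | succ d ih =>
    have h1 : (untl φ ψ).sat (t 1) :=
      ih (t := fun n => t (n + 1)) (fun n => hstep (n + 1)) hd fun e he => hlt (e + 1) (by omega)
    exact sat_untl_iff.2 (.inr ⟨hlt 0 d.succ_pos, hstep 0 h1⟩)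

/-- `t` need not be the sequence of suffixes of `t 0`: the expansion law unrolls the until
along `t`, and the discharge point rules out an until that is postponed forever. -/
lemma sat_untl_iff_of_step {φ ψ : LTLFormula AP} {t : ℕ → Trace AP}
    (hstep : ∀ n, (untl φ ψ).sat (t (n + 1)) ↔ (untl φ ψ).sat ((t n).suffix 1))
    (hdis : ∃ d, (untl φ ψ).Discharged (t d)) :
    (untl φ ψ).sat (t 0) ↔ ∃ d, ψ.sat (t d) ∧ ∀ e < d, φ.sat (t e) := by
  classical
  refine ⟨fun h0 => ?_, fun ⟨d, hd, hlt⟩ => sat_untl_of_step (fun n => (hstep n).1) hd hlt⟩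
  have hpending : ∀ n, (∀ e < n, ¬ ψ.sat (t e)) → (untl φ ψ).sat (t n) := by
    intro n
    induction n with
    | zero => exact fun _ => h0
    | succ n ih =>
      intro hne
      have hn := sat_untl_iff.1 (ih fun e he => hne e (by omega))
      exact (hstep n).2 (hn.resolve_left (hne n n.lt_succ_self)).2
  have hex : ∃ d, ψ.sat (t d) := by
    by_contra! hnone
    obtain ⟨d, hd⟩ := hdis
    exact hnone d (hd (hpending d fun e _ => hnone e))
  refine ⟨Nat.find hex, Nat.find_spec hex, fun e he => ?_⟩
  have hχ := hpending e fun e' he' => Nat.find_min hex (he'.trans he)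
  exact ((sat_untl_iff.1 hχ).resolve_left (Nat.find_min hex he)).1

lemma sat_suffix_comp_iff {π : Trace AP} {h : ℕ → ℕ} {Φ : Set (LTLFormula AP)}
    (hstep : ∀ χ ∈ Φ, ∀ m, χ.sat (π.suffix (h (m + 1))) ↔ χ.sat (π.suffix (h m + 1)))
    (hdis : ∀ χ ∈ Φ, ∀ m, ∃ d, χ.Discharged (π.suffix (h (m + d))))
    {φ : LTLFormula AP} (hφ : ∀ χ ∈ φ.subformulas, χ ∈ Φ) (m : ℕ) :
    φ.sat (Trace.suffix (π ∘ h) m) ↔ φ.sat (π.suffix (h m)) := by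
  induction φ generalizing m with
  | bot => exact Iff.rfl
  | atom p => simp [sat, Trace.suffix]
  | neg φ ih => exact not_congr (ih (fun χ hχ => hφ χ (by simp [subformulas, hχ])) m)
  | disj φ ψ ihφ ihψ =>
    exact or_congr (ihφ (fun χ hχ => hφ χ (by simp [subformulas, hχ])) m)
      (ihψ (fun χ hχ => hφ χ (by simp [subformulas, hχ])) m)
  | next φ ih =>
    change φ.sat ((Trace.suffix (π ∘ h) m).suffix 1) ↔ φ.sat ((π.suffix (h m)).suffix 1)
    rw [Trace.suffix_suffix, Trace.suffix_suffix]
    exact (ih (fun χ hχ => hφ χ (by simp [subformulas, hχ])) (m + 1)).trans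
      (hstep φ (hφ φ (by simp [subformulas, mem_subformulas_self])) m)
  | untl φ ψ ihφ ihψ =>
    have hself := hφ _ (mem_subformulas_self _)
    have key := sat_untl_iff_of_step (t := fun d => π.suffix (h (m + d)))
      (fun n => by rw [Trace.suffix_suffix]; exact hstep _ hself (m + n)) (hdis _ hself m)
    change (∃ d, ψ.sat ((Trace.suffix (π ∘ h) m).suffix d) ∧
      ∀ e < d, φ.sat ((Trace.suffix (π ∘ h) m).suffix e)) ↔ _
    simp only [Trace.suffix_suffix, ihφ (fun χ hχ => hφ χ (by simp [subformulas, hχ])),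
      ihψ (fun χ hχ => hφ χ (by simp [subformulas, hχ]))]
    exact key.symm

end LTLFormula

/-- Position in `w` read at position `m` of the lasso `w[0, i + p) (w[i, i + p))^ω`. -/
def lassoIndex (i p m : ℕ) : ℕ := if m < i then m else i + (m - i) % p

section Lasso

variable {i p : ℕ}

lemma lassoIndex_of_lt_add {m : ℕ} (hm : m < i + p) : lassoIndex i p m = m := by
  unfold lassoIndex
  split
  · rfl
  · rw [Nat.mod_eq_of_lt (by omega)]; omega

lemma lassoIndex_zero : lassoIndex i p 0 = 0 := by
  unfold lassoIndex
  split <;> simp_all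

lemma lassoIndex_add_mul {m : ℕ} (hm : i ≤ m) (t : ℕ) :
    lassoIndex i p (m + p * t) = lassoIndex i p m := by
  unfold lassoIndex
  rw [if_neg (by omega), if_neg (by omega), show m + p * t - i = m - i + p * t by omega,
    Nat.add_mul_mod_self_left]

lemma lassoIndex_succ (hp : 0 < p) (m : ℕ) :
    lassoIndex i p (m + 1) = lassoIndex i p m + 1 ∨
      lassoIndex i p m + 1 = i + p ∧ lassoIndex i p (m + 1) = i := by
  unfold lassoIndex
  by_cases hm : m < i
  · left
    split_ifs <;> simp_all
    omega
  · rw [if_neg hm, if_neg (by omega), show m + 1 - i = m - i + 1 by omega, Nat.add_mod_eq_ite]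
    have := Nat.mod_lt (m - i) hp
    rcases Nat.lt_or_ge 1 p with h1 | h1
    · rw [Nat.mod_eq_of_lt h1]; split_ifs <;> omega
    · obtain rfl : p = 1 := by omega
      simp [Nat.mod_one]

lemma exists_lassoIndex_add_eq (hp : 0 < p) {k : ℕ} (hik : i ≤ k) (hk : k < i + p) (m : ℕ) :
    ∃ d, lassoIndex i p (m + d) = k :=
  ⟨k + p * m - m, by
    have := Nat.le_mul_of_pos_left m hp
    rw [show m + (k + p * m - m) = k + p * m by omega, lassoIndex_add_mul hik,
      lassoIndex_of_lt_add hk]⟩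

lemma extendPer_ofFn {α : Type} (w : ℕ → α) (h : List.ofFn (fun t : Fin p => w (i + t)) ≠ []) :
    extendPer (List.ofFn fun t : Fin i => w t) (List.ofFn fun t : Fin p => w (i + t)) h =
      w ∘ lassoIndex i p := by
  funext m
  simp only [extendPer, lassoIndex, List.length_ofFn, List.get_eq_getElem, List.getElem_ofFn,
    Function.comp_apply]
  split <;> rfl

lemma ultPeriodic_comp_lassoIndex {α : Type} (hp : 0 < p) (w : ℕ → α) :
    UltPeriodic (w ∘ lassoIndex i p) :=
  ⟨_, _, by simpa using hp.ne', (extendPer_ofFn w _).symm⟩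

lemma Buchi.accepts_comp_lassoIndex {A : Type} {B : Buchi A} {w : ℕ → A} {ρ : ℕ → Fin B.n}
    (hstart : ρ 0 ∈ B.start) (htrans : ∀ n, B.trans (ρ n) (w n) (ρ (n + 1))) (hp : 0 < p)
    (hloop : ρ (i + p) = ρ i) (hrec : ρ i ∈ B.recur) : B.Accepts (w ∘ lassoIndex i p) := by
  refine ⟨ρ ∘ lassoIndex i p, by simpa [lassoIndex_zero] using hstart, fun m => ?_,
    fun N => ⟨i + p * N, by nlinarith, ?_⟩⟩
  · rcases lassoIndex_succ (i := i) hp m with h | ⟨h, h'⟩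
    · simpa [h] using htrans (lassoIndex i p m)
    · simpa [h, h', hloop] using htrans (lassoIndex i p m)
  · simpa [lassoIndex_add_mul le_rfl, lassoIndex_of_lt_add (show i < i + p by omega)] using hrec

end Lasso

open Filter LTLFormula

section Pumping

variable {AP : Type}

/-- Pigeonhole on the finitely many pairs (colour, truth values of the subformulas of `φ`),
with the second position chosen beyond a discharge point of every subformula. -/
lemma exists_lasso {β : Type*} [Finite β] (c : ℕ → β) (π : Trace AP) (φ : LTLFormula AP)
    {P : ℕ → Prop} (hP : ∃ᶠ n in atTop, P n) :
    ∃ i p, 0 < p ∧ P i ∧ c (i + p) = c i ∧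
      (∀ χ ∈ φ.subformulas, χ.sat (π.suffix (i + p)) ↔ χ.sat (π.suffix i)) ∧
      ∀ χ ∈ φ.subformulas, ∃ k, i ≤ k ∧ k < i + p ∧ χ.Discharged (π.suffix k) := by
  classical
  let g : ℕ → β × ({χ // χ ∈ φ.subformulas} → Prop) :=
    fun n => (c n, fun χ => χ.1.sat (π.suffix n))
  obtain ⟨y, hy⟩ : ∃ y, ∃ᶠ n in atTop, P n ∧ g n = y :=
    frequently_exists.1 (hP.mono fun n hn => ⟨g n, hn, rfl⟩)
  obtain ⟨i, hi, hgi⟩ := hy.exists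
  have hwin : ∀ᶠ j in atTop, i < j ∧
      ∀ χ ∈ {χ | χ ∈ φ.subformulas}, ∃ k, i ≤ k ∧ k < j ∧ χ.Discharged (π.suffix k) :=
    (eventually_gt_atTop i).and <| (eventually_all_finite (List.finite_toSet _)).2 fun χ _ =>
      let ⟨k, hik, hk⟩ := χ.exists_discharged_suffix π i
      (eventually_gt_atTop k).mono fun _ hj => ⟨k, hik, hj, hk⟩
  obtain ⟨j, ⟨-, hgj⟩, hij, hwin⟩ := (hy.and_eventually hwin).exists
  obtain ⟨p, rfl⟩ := Nat.exists_eq_add_of_le hij.le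
  have hg : g (i + p) = g i := hgj.trans hgi.symm
  exact ⟨i, p, by omega, hi, congrArg Prod.fst hg,
    fun χ hχ => iff_of_eq (congrFun (congrArg Prod.snd hg) ⟨χ, hχ⟩), hwin⟩

variable {π : Trace AP} {φ : LTLFormula AP} {i p : ℕ}

lemma sat_comp_lassoIndex_iff (hp : 0 < p)
    (hth : ∀ χ ∈ φ.subformulas, χ.sat (π.suffix (i + p)) ↔ χ.sat (π.suffix i))
    (hwin : ∀ χ ∈ φ.subformulas, ∃ k, i ≤ k ∧ k < i + p ∧ χ.Discharged (π.suffix k)) :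
    φ.sat (π ∘ lassoIndex i p) ↔ φ.sat π := by
  have hstep : ∀ χ ∈ {χ | χ ∈ φ.subformulas}, ∀ m,
      χ.sat (π.suffix (lassoIndex i p (m + 1))) ↔ χ.sat (π.suffix (lassoIndex i p m + 1)) := by
    intro χ hχ m
    rcases lassoIndex_succ (i := i) hp m with h | ⟨h, h'⟩
    · rw [h]
    · rw [h, h', hth χ hχ]
  have hdis : ∀ χ ∈ {χ | χ ∈ φ.subformulas}, ∀ m, ∃ d,
      χ.Discharged (π.suffix (lassoIndex i p (m + d))) := by
    intro χ hχ m
    obtain ⟨k, hik, hk, hdk⟩ := hwin χ hχ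
    obtain ⟨d, hd⟩ := exists_lassoIndex_add_eq hp hik hk m
    exact ⟨d, hd ▸ hdk⟩
  simpa [lassoIndex_zero] using sat_suffix_comp_iff hstep hdis (fun _ h => h) 0

end Pumping

theorem supp_eq_sInter_upCCT_general (AP : Type)
    (B : Buchi (Set AP)) :
    B.supp = ⋂₀ {K : Set (LTLFormula AP) |
      ∃ π ∈ B.lang, UltPeriodic π ∧ K = upCCT π} := by
  refine Set.Subset.antisymm (fun φ hφ K ⟨π, hπ, _, hK⟩ => hK ▸ hφ π hπ) ?_
  rintro φ hφ π ⟨ρ, hstart, htrans, hrec⟩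
  obtain ⟨i, p, hp, hrec_i, hloop, hth, hwin⟩ :=
    exists_lasso ρ π φ (P := fun n => ρ n ∈ B.recur) (frequently_atTop.2 hrec)
  have hpumped : φ.sat (π ∘ lassoIndex i p) :=
    hφ _ ⟨_, Buchi.accepts_comp_lassoIndex hstart htrans hp hloop hrec_i,
      ultPeriodic_comp_lassoIndex hp π, rfl⟩
  exact (sat_comp_lassoIndex_iff hp hth hwin).1 hpumped

/-- the support of a Büchi automaton is the intersection of the
complete consistent theories of its accepted ultimately periodic traces. -/
theorem supp_eq_sInter_upCCT (AP : Type) [Fintype AP] [Nonempty AP]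
    (B : Buchi (Set AP)) :
    B.supp = ⋂₀ {K : Set (LTLFormula AP) |
      ∃ π ∈ B.lang, UltPeriodic π ∧ K = upCCT π} :=
  supp_eq_sInter_upCCT_general AP B
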